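/- arXiv:2505.11986 — 10 statements merged into one kernel-verified Lean document; each statement's English description precedes it below -/
import Mathlib

section
/- Let M be a real symmetric n×n matrix with spectral decomposition M = Σ_r θ_r E_r. For indices u ≠ v and time τ, equality |(e^{iτM})_{v,u}| = Σ_r |(E_r)_{v,u}| holds if and only if there exists a complex number γ such that e^{iτθ_r} = γ for every r with (E_r)_{v,u} > 0 and e^{iτθ_r} = -γ for every r with (E_r)_{v,u} < 0. -/
/-!
Equality in the triangle inequality `‖∑ z_r‖ ≤ ∑ ‖z_r‖` holds exactly when all the terms lie
on one ray, which is seen by comparing `⟪z_r, S⟫ ≤ ‖z_r‖ ‖S‖` termwise with `S = ∑ z_r`.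
For `z_r = e^{iτθ_r} (E_r)_{v,u}` with unimodular `e^{iτθ_r}`, lying on the ray through a unit
vector `γ` means `e^{iτθ_r} = γ` when `(E_r)_{v,u} > 0` and `e^{iτθ_r} = -γ` when it is negative.
-/

open Finset

theorem norm_sum_smul_eq_norm_smul_sum_of_norm_sum_eq_sum_norm {ι F : Type*}
    [NormedAddCommGroup F] [InnerProductSpace ℝ F] {s : Finset ι} {z : ι → F}
    (h : ‖∑ j ∈ s, z j‖ = ∑ j ∈ s, ‖z j‖) {i : ι} (hi : i ∈ s) :
    ‖∑ j ∈ s, z j‖ • z i = ‖z i‖ • ∑ j ∈ s, z j := by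
  set S := ∑ j ∈ s, z j
  have hle : ∀ j ∈ s, inner ℝ (z j) S ≤ ‖z j‖ * ‖S‖ := fun j _ => real_inner_le_norm _ _
  have hsum : ∑ j ∈ s, inner ℝ (z j) S = ∑ j ∈ s, ‖z j‖ * ‖S‖ := by
    rw [← sum_inner, ← sum_mul, ← h, real_inner_self_eq_norm_mul_norm]
  exact inner_eq_norm_mul_iff_real.mp ((sum_eq_sum_iff_of_le hle).mp hsum i hi)

theorem norm_sum_nonneg_smul_eq_sum_norm {ι E : Type*} [SeminormedAddCommGroup E]
    [NormedSpace ℝ E] (s : Finset ι) {c : ι → ℝ} (hc : ∀ i ∈ s, 0 ≤ c i) (x : E) :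
    ‖∑ i ∈ s, c i • x‖ = ∑ i ∈ s, ‖c i • x‖ := by
  rw [← sum_smul, norm_smul, Real.norm_of_nonneg (sum_nonneg hc), sum_mul]
  exact sum_congr rfl fun i hi => by rw [norm_smul, Real.norm_of_nonneg (hc i hi)]

theorem Complex.norm_sum_mul_ofReal_eq_sum_abs_iff {ι : Type*} (s : Finset ι) {w : ι → ℂ}
    (hw : ∀ i ∈ s, ‖w i‖ = 1) (a : ι → ℝ) :
    ‖∑ i ∈ s, w i * a i‖ = ∑ i ∈ s, |a i| ↔
      ∃ γ : ℂ, ∀ i ∈ s, (0 < a i → w i = γ) ∧ (a i < 0 → w i = -γ) := by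
  have hnorm : ∀ i ∈ s, ‖w i * a i‖ = |a i| := fun i hi => by
    rw [norm_mul, hw i hi, one_mul, Complex.norm_real, Real.norm_eq_abs]
  constructor
  · intro h
    set S := ∑ i ∈ s, w i * a i
    have h' : ‖S‖ = ∑ i ∈ s, ‖w i * a i‖ := h.trans (sum_congr rfl fun i hi => (hnorm i hi).symm)
    refine ⟨S / ‖S‖, fun i hi => ?_⟩
    have hray : ‖S‖ * (w i * a i) = |a i| * S := by
      simpa only [Complex.real_smul, hnorm i hi] using
        norm_sum_smul_eq_norm_smul_sum_of_norm_sum_eq_sum_norm h' hi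
    have hS : a i ≠ 0 → (‖S‖ : ℂ) ≠ 0 := fun ha => by
      have : |a i| ≤ ‖S‖ := h ▸ single_le_sum (fun j _ => abs_nonneg (a j)) hi
      exact_mod_cast (this.trans_lt' (abs_pos.mpr ha)).ne'
    constructor
    · intro ha
      rw [abs_of_pos ha] at hray
      rw [eq_div_iff (hS ha.ne')]
      apply mul_left_cancel₀ (Complex.ofReal_ne_zero.mpr ha.ne')
      linear_combination hray
    · intro ha
      rw [abs_of_neg ha, Complex.ofReal_neg] at hray
      rw [← neg_div, eq_div_iff (hS ha.ne)]
      apply mul_left_cancel₀ (Complex.ofReal_ne_zero.mpr ha.ne)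
      linear_combination hray
  · rintro ⟨γ, hγ⟩
    have hterm : ∀ i ∈ s, w i * a i = |a i| • γ := fun i hi => by
      rcases lt_trichotomy (a i) 0 with ha | ha | ha
      · rw [(hγ i hi).2 ha, abs_of_neg ha, Complex.real_smul, Complex.ofReal_neg]; ring
      · simp [ha]
      · rw [(hγ i hi).1 ha, abs_of_pos ha, Complex.real_smul]; ring
    rw [sum_congr rfl hterm, norm_sum_nonneg_smul_eq_sum_norm s (fun i _ => abs_nonneg (a i))]
    exact sum_congr rfl fun i hi => by rw [← hterm i hi, hnorm i hi]

open Complex Matrix in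
theorem stmt_1_general {n m : ℕ} (θ : Fin m → ℝ)
    (E : Fin m → Matrix (Fin n) (Fin n) ℝ)
    (u v : Fin n) (τ : ℝ) :
    ‖∑ r, Complex.exp (Complex.I * τ * θ r) * (E r v u : ℂ)‖ =
        ∑ r, |E r v u| ↔
      ∃ γ : ℂ, ∀ r,
        (0 < E r v u → Complex.exp (Complex.I * τ * θ r) = γ) ∧
        (E r v u < 0 → Complex.exp (Complex.I * τ * θ r) = -γ) := by
  have hunit : ∀ r ∈ univ, ‖exp (I * τ * θ r)‖ = 1 := fun r _ => by
    rw [mul_assoc, mul_comm, ← ofReal_mul, norm_exp_ofReal_mul_I]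
  simpa using norm_sum_mul_ofReal_eq_sum_abs_iff univ hunit (fun r => E r v u)

open Complex Matrix in
theorem stmt_1 {n m : ℕ} (θ : Fin m → ℝ) (hθ : Function.Injective θ)
    (E : Fin m → Matrix (Fin n) (Fin n) ℝ)
    (hsym : ∀ r, (E r)ᵀ = E r)
    (horth : ∀ r s, E r * E s = if r = s then E r else 0)
    (hsum : ∑ r, E r = 1)
    (M : Matrix (Fin n) (Fin n) ℝ)
    (hM : M = ∑ r, θ r • E r)
    (u v : Fin n) (huv : u ≠ v) (τ : ℝ) :
    ‖∑ r, Complex.exp (Complex.I * τ * θ r) * (E r v u : ℂ)‖ =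
        ∑ r, |E r v u| ↔
      ∃ γ : ℂ, ∀ r,
        (0 < E r v u → Complex.exp (Complex.I * τ * θ r) = γ) ∧
        (E r v u < 0 → Complex.exp (Complex.I * τ * θ r) = -γ) :=
  stmt_1_general θ E u v τ
end

section
/- Let M be a real symmetric n×n matrix with spectral decomposition M = Σ_r θ_r E_r, let u ≠ v, and let θ_s satisfy (E_s)_{v,u} > 0. Then |(e^{iτM})_{v,u}| = Σ_r |(E_r)_{v,u}| at time τ > 0 if and only if τ(θ_s − θ_r) is an even multiple of π for every θ_r with (E_r)_{v,u} > 0 and an odd multiple of π for every θ_r with (E_r)_{v,u} < 0. -/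
/-!
Since `‖exp (i τ θ_r)‖ = 1`, the bound `∑ r, |(E_r)_{v,u}|` is the triangle inequality for the
sum `∑ r, exp (i τ θ_r) (E_r)_{v,u}`. Equality holds iff every term is a nonnegative multiple of
one unit vector `ζ`; the term `r = s` forces `ζ = exp (i τ θ_s)`, so `exp (i τ θ_r) = ± exp (i τ θ_s)`
according to the sign of `(E_r)_{v,u}`, i.e. `τ (θ_s - θ_r)` lies in `2πℤ` or in `π + 2πℤ`.
-/

namespace Complex

open scoped ComplexConjugate ComplexOrder

theorem norm_sum_eq_sum_norm_iff {ι : Type*} (s : Finset ι) (f : ι → ℂ) :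
    ‖∑ i ∈ s, f i‖ = ∑ i ∈ s, ‖f i‖ ↔ ∃ ζ : ℂ, ‖ζ‖ = 1 ∧ ∀ i ∈ s, f i = ‖f i‖ * ζ := by
  constructor
  · intro h
    set S := ∑ i ∈ s, f i
    set ζ := exp (S.arg * I)
    have hζ : ‖ζ‖ = 1 := norm_exp_ofReal_mul_I _
    have hζζ : conj ζ * ζ = 1 := by rw [mul_comm, mul_conj, normSq_eq_norm_sq, hζ]; simp
    -- Rotating every term by `conj ζ` puts the sum on the positive real axis; the real parts
    -- then add up to the sum of the norms, which forces each rotated term to be nonnegative.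
    have hre_le : ∀ i ∈ s, (conj ζ * f i).re ≤ ‖f i‖ := fun i _ => by
      simpa [hζ] using re_le_norm (conj ζ * f i)
    have hre_sum : ∑ i ∈ s, (conj ζ * f i).re = ∑ i ∈ s, ‖f i‖ := by
      have hS : S = ‖S‖ * ζ := (norm_mul_exp_arg_mul_I S).symm
      calc ∑ i ∈ s, (conj ζ * f i).re = (conj ζ * (‖S‖ * ζ)).re := by
            rw [← re_sum, ← Finset.mul_sum, ← hS]
        _ = ∑ i ∈ s, ‖f i‖ := by rw [mul_left_comm, hζζ, mul_one, ofReal_re, h]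
    refine ⟨ζ, hζ, fun i hi => ?_⟩
    have hre := (Finset.sum_eq_sum_iff_of_le hre_le).1 hre_sum i hi
    have hnorm : ‖conj ζ * f i‖ = ‖f i‖ := by simp [hζ]
    have hnonneg : 0 ≤ conj ζ * f i := re_eq_norm.1 (hre.trans hnorm.symm)
    calc f i = conj ζ * f i * ζ := by rw [mul_right_comm, hζζ, one_mul]
      _ = ‖f i‖ * ζ := by rw [← hnorm, ← eq_coe_norm_of_nonneg hnonneg]
  · rintro ⟨ζ, hζ, hf⟩
    rw [Finset.sum_congr rfl hf, ← Finset.sum_mul, norm_mul, hζ, mul_one, ← ofReal_sum,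
      norm_real, Real.norm_of_nonneg (Finset.sum_nonneg fun i _ => norm_nonneg _)]

theorem norm_sum_mul_ofReal_eq_sum_abs_iff_s2 {ι : Type*} [Fintype ι] {e : ι → ℂ}
    (he : ∀ i, ‖e i‖ = 1) {c : ι → ℝ} {j : ι} (hj : 0 < c j) :
    ‖∑ i, e i * c i‖ = ∑ i, |c i| ↔
      (∀ i, 0 < c i → e i = e j) ∧ (∀ i, c i < 0 → e i = -e j) := by
  have hnorm : ∀ i, ‖e i * c i‖ = |c i| := fun i => by rw [norm_mul, he, one_mul, norm_real,
    Real.norm_eq_abs]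
  simp_rw [← hnorm, norm_sum_eq_sum_norm_iff, hnorm, Finset.mem_univ, true_imp_iff]
  constructor
  · rintro ⟨ζ, -, hζ⟩
    have hζj : ζ = e j := by
      have := hζ j
      rw [abs_of_pos hj, mul_comm (c j : ℂ)] at this
      exact (mul_right_cancel₀ (ofReal_ne_zero.2 hj.ne') this).symm
    subst hζj
    refine ⟨fun i hi => ?_, fun i hi => ?_⟩
    · have := hζ i
      rw [abs_of_pos hi, mul_comm (c i : ℂ)] at this
      exact mul_right_cancel₀ (ofReal_ne_zero.2 hi.ne') this
    · have := hζ i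
      rw [abs_of_neg hi, ofReal_neg, neg_mul, ← mul_neg, mul_comm (c i : ℂ)] at this
      exact mul_right_cancel₀ (ofReal_ne_zero.2 hi.ne) this
  · rintro ⟨hpos, hneg⟩
    refine ⟨e j, he j, fun i => ?_⟩
    rcases lt_trichotomy (c i) 0 with hi | hi | hi
    · rw [hneg i hi, abs_of_neg hi]; push_cast; ring
    · simp [hi]
    · rw [hpos i hi, abs_of_pos hi, mul_comm]

theorem exp_mul_I_eq_exp_mul_I_iff {x y : ℝ} :
    exp (x * I) = exp (y * I) ↔ ∃ k : ℤ, y - x = 2 * k * Real.pi := by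
  have hcoeff : ∀ n : ℤ, (x * I : ℂ) = y * I + n * (2 * Real.pi * I) ↔
      x = y + n * (2 * Real.pi) := fun n => by
    constructor
    · intro h; simpa using congrArg im h
    · intro h; rw [h]; push_cast; ring
  simp_rw [exp_eq_exp_iff_exists_int, hcoeff]
  constructor
  · rintro ⟨n, hn⟩; exact ⟨-n, by push_cast; linarith⟩
  · rintro ⟨k, hk⟩; exact ⟨-k, by push_cast; linarith⟩

theorem exp_mul_I_eq_neg_exp_mul_I_iff {x y : ℝ} :
    exp (x * I) = -exp (y * I) ↔ ∃ k : ℤ, y - x = (2 * k + 1) * Real.pi := by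
  have hneg : -exp (y * I) = exp ((y - Real.pi : ℝ) * I) := by
    rw [ofReal_sub, sub_mul, exp_sub, exp_pi_mul_I, div_neg, div_one]
  rw [hneg, exp_mul_I_eq_exp_mul_I_iff]
  exact exists_congr fun k => ⟨fun h => by linarith, fun h => by linarith⟩

end Complex

open Complex Matrix Real in
theorem stmt_2_general {n m : ℕ} (θ : Fin m → ℝ)
    (E : Fin m → Matrix (Fin n) (Fin n) ℝ)
    (u v : Fin n)
    (s : Fin m) (hs : 0 < E s v u)
    (τ : ℝ) :
    ‖∑ r, Complex.exp (Complex.I * τ * θ r) * (E r v u : ℂ)‖ =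
        ∑ r, |E r v u| ↔
      (∀ r, 0 < E r v u → ∃ k : ℤ, τ * (θ s - θ r) = (2 * k) * Real.pi) ∧
      (∀ r, E r v u < 0 → ∃ k : ℤ, τ * (θ s - θ r) = (2 * k + 1) * Real.pi) := by
  have hphase : ∀ r, Complex.I * τ * θ r = ((τ * θ r : ℝ) : ℂ) * Complex.I := fun r => by
    push_cast; ring
  simp_rw [hphase]
  rw [norm_sum_mul_ofReal_eq_sum_abs_iff_s2 (c := fun r => E r v u)
    (fun r => norm_exp_ofReal_mul_I _) hs]
  simp only [exp_mul_I_eq_exp_mul_I_iff, exp_mul_I_eq_neg_exp_mul_I_iff, mul_sub]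

open Complex Matrix Real in
theorem stmt_2 {n m : ℕ} (θ : Fin m → ℝ) (hθ : Function.Injective θ)
    (E : Fin m → Matrix (Fin n) (Fin n) ℝ)
    (hsym : ∀ r, (E r)ᵀ = E r)
    (horth : ∀ r s, E r * E s = if r = s then E r else 0)
    (hsum : ∑ r, E r = 1)
    (M : Matrix (Fin n) (Fin n) ℝ)
    (hM : M = ∑ r, θ r • E r)
    (u v : Fin n) (huv : u ≠ v)
    (s : Fin m) (hs : 0 < E s v u)
    (τ : ℝ) (hτ : 0 < τ) :
    ‖∑ r, Complex.exp (Complex.I * τ * θ r) * (E r v u : ℂ)‖ =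
        ∑ r, |E r v u| ↔
      (∀ r, 0 < E r v u → ∃ k : ℤ, τ * (θ s - θ r) = (2 * k) * Real.pi) ∧
      (∀ r, E r v u < 0 → ∃ k : ℤ, τ * (θ s - θ r) = (2 * k + 1) * Real.pi) :=
  stmt_2_general θ E u v s hs τ
end

section
/- If peak state transfer occurs from u to v at time τ for a real symmetric matrix M (i.e., there is γ ∈ ℂ with e^{iτθ_r} = γ when (E_r)_{v,u} > 0 and e^{iτθ_r} = −γ when (E_r)_{v,u} < 0, with at least one nonzero entry), then the transfer amplitude at time 2τ vanishes: (e^{2iτM})_{v,u} = 0. -/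
open Complex Matrix in
theorem stmt_4 {n m : ℕ} (θ : Fin m → ℝ) (hθ : Function.Injective θ)
    (E : Fin m → Matrix (Fin n) (Fin n) ℝ)
    (hsym : ∀ r, (E r)ᵀ = E r)
    (horth : ∀ r s, E r * E s = if r = s then E r else 0)
    (hsum : ∑ r, E r = 1)
    (M : Matrix (Fin n) (Fin n) ℝ)
    (hM : M = ∑ r, θ r • E r)
    (u v : Fin n) (huv : u ≠ v) (τ : ℝ)
    (hpeak : ∃ γ : ℂ, ∀ r,
      (0 < E r v u → Complex.exp (Complex.I * τ * θ r) = γ) ∧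
      (E r v u < 0 → Complex.exp (Complex.I * τ * θ r) = -γ))
    (hne : ∃ r, E r v u ≠ 0) :
    ∑ r, Complex.exp (Complex.I * (2 * τ) * θ r) * (E r v u : ℂ) = 0 := by
  obtain ⟨γ, hγ⟩ := hpeak
  have hterm : ∀ r, Complex.exp (Complex.I * (2 * τ) * θ r) * (E r v u : ℂ)
      = γ ^ 2 * (E r v u : ℂ) := by
    intro r
    have hexp : Complex.exp (Complex.I * (2 * τ) * θ r)
        = Complex.exp (Complex.I * τ * θ r) ^ 2 := by
      rw [← Complex.exp_nat_mul]
      ring_nf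
    rcases lt_trichotomy (E r v u) 0 with h | h | h
    · rw [hexp, (hγ r).2 h]; ring
    · simp [h]
    · rw [hexp, (hγ r).1 h]
  rw [Finset.sum_congr rfl (fun r _ => hterm r), ← Finset.mul_sum]
  have : ∑ r, (E r v u : ℂ) = 0 := by
    have h := congrArg (fun A => A v u) hsum
    simp only [Matrix.sum_apply] at h
    rw [Matrix.one_apply_ne (Ne.symm huv)] at h
    exact_mod_cast h
  rw [this, mul_zero]
end

section
/- For every positive integer n, Σ_{k=1}^{n} k² · C(2n, n+k) = n · 4^{n−1}, where C denotes the binomial coefficient. -/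
open Finset

lemma cast_succ_mul_choose (m j : ℕ) :
    ((j:ℚ)+1) * (Nat.choose (m+1) (j+1)) = ((m:ℚ)+1) * Nat.choose m j := by
  have h := Nat.add_one_mul_choose_eq m j
  have h2 : ((Nat.succ m * Nat.choose m j : ℕ) : ℚ)
      = ((Nat.choose (Nat.succ m) (Nat.succ j) * Nat.succ j : ℕ) : ℚ) := by rw [h]
  push_cast at h2
  linarith

lemma sum_choose_cast (m : ℕ) : ∑ j ∈ range (m+1), ((Nat.choose m j : ℚ)) = 2^m := by
  exact_mod_cast Nat.sum_range_choose m

lemma S1 (m : ℕ) : ∑ j ∈ range (m+2), (j:ℚ) * Nat.choose (m+1) j = ((m:ℚ)+1) * 2^m := by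
  rw [Finset.sum_range_succ']
  simp only [Nat.cast_zero, zero_mul, add_zero]
  have h : ∀ j ∈ range (m+1), ((j+1:ℕ):ℚ) * Nat.choose (m+1) (j+1) = ((m:ℚ)+1) * Nat.choose m j := by
    intro j _; push_cast; exact cast_succ_mul_choose m j
  rw [Finset.sum_congr rfl h, ← Finset.mul_sum, sum_choose_cast]

lemma S2 (m : ℕ) : ∑ j ∈ range (m+3), (j:ℚ) * ((j:ℚ)-1) * Nat.choose (m+2) j
    = ((m:ℚ)+2) * (((m:ℚ)+1) * 2^m) := by
  rw [Finset.sum_range_succ', Finset.sum_range_succ']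
  have h : ∀ j ∈ range (m+1), ((j+1+1:ℕ):ℚ) * (((j+1+1:ℕ):ℚ)-1) * Nat.choose (m+2) (j+1+1)
      = ((m:ℚ)+2) * (((m:ℚ)+1) * Nat.choose m j) := by
    intro j _
    have h1 := cast_succ_mul_choose (m+1) (j+1)
    have h2 := cast_succ_mul_choose m j
    push_cast at h1 h2 ⊢
    nlinarith [h1, h2]
  rw [Finset.sum_congr rfl h]
  simp only [Nat.cast_zero, Nat.cast_one, zero_mul, mul_zero, add_zero]
  rw [← Finset.mul_sum, ← Finset.mul_sum, sum_choose_cast]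
  ring

theorem stmt_5 (n : ℕ) (hn : 0 < n) :
    ∑ k ∈ Finset.Icc 1 n, k ^ 2 * Nat.choose (2 * n) (n + k) = n * 4 ^ (n - 1) := by
  obtain ⟨p, rfl⟩ := Nat.exists_eq_succ_of_ne_zero hn.ne'
  set T : ℚ := ∑ j ∈ range (p+1), ((j:ℚ)+1)^2 * Nat.choose (2*p+2) (p+2+j) with hT
  set S : ℚ := ∑ j ∈ range (2*p+3), ((j:ℚ)-((p:ℚ)+1))^2 * Nat.choose (2*p+2) j with hS
  -- Step C : compute S
  have hSval : S = 2*((p:ℚ)+1)*4^p := by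
    have expand : ∀ j ∈ range (2*p+3),
        ((j:ℚ)-((p:ℚ)+1))^2 * Nat.choose (2*p+2) j
        = (j:ℚ)*((j:ℚ)-1) * Nat.choose (2*p+2) j
          + (-1-2*(p:ℚ)) * ((j:ℚ) * Nat.choose (2*p+2) j)
          + ((p:ℚ)+1)^2 * (Nat.choose (2*p+2) j : ℚ) := by
      intro j _; ring
    rw [hS, Finset.sum_congr rfl expand, Finset.sum_add_distrib, Finset.sum_add_distrib,
      ← Finset.mul_sum, ← Finset.mul_sum]
    have e1 : ∑ j ∈ range (2*p+3), (j:ℚ)*((j:ℚ)-1) * Nat.choose (2*p+2) j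
        = ((2*p:ℚ)+2) * (((2*p:ℚ)+1) * 2^(2*p)) := by
      have := S2 (2*p); push_cast at this ⊢; convert this using 2 <;> ring_nf
    have e2 : ∑ j ∈ range (2*p+3), (j:ℚ) * Nat.choose (2*p+2) j
        = ((2*p:ℚ)+2) * 2^(2*p+1) := by
      have := S1 (2*p+1); push_cast at this ⊢; convert this using 2 <;> ring_nf
    have e3 : ∑ j ∈ range (2*p+3), (Nat.choose (2*p+2) j : ℚ) = 2^(2*p+2) := by
      have := sum_choose_cast (2*p+2); convert this using 2 <;> ring_nf
    rw [e1, e2, e3]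
    have h4 : (4:ℚ)^p = 2^(2*p) := by rw [show (4:ℚ) = 2^2 by norm_num, ← pow_mul]
    rw [h4]; ring
  -- Step B : S = 2 * T
  have hST : S = 2 * T := by
    have hsplit : (∑ j ∈ Ico 0 (p+1), ((j:ℚ)-((p:ℚ)+1))^2 * Nat.choose (2*p+2) j)
        + (∑ j ∈ Ico (p+1) (2*p+3), ((j:ℚ)-((p:ℚ)+1))^2 * Nat.choose (2*p+2) j) = S := by
      rw [hS, Finset.range_eq_Ico]
      exact Finset.sum_Ico_consecutive _ (by omega) (by omega)
    -- right half
    have hright : (∑ j ∈ Ico (p+1) (2*p+3), ((j:ℚ)-((p:ℚ)+1))^2 * Nat.choose (2*p+2) j) = T := by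
      rw [Finset.sum_Ico_eq_sum_range]
      have : 2*p+3 - (p+1) = p+2 := by omega
      rw [this, Finset.sum_range_succ']
      simp only [add_zero, Nat.cast_add, Nat.cast_one]
      have hz : (((p:ℚ)+1) - ((p:ℚ)+1))^2 * (Nat.choose (2*p+2) (p+1) : ℚ) = 0 := by ring
      rw [hT]
      refine Eq.trans (by rw [hz, add_zero]) ?_
      refine Finset.sum_congr rfl fun j _ => ?_
      have : p+1+(j+1) = p+2+j := by omega
      rw [this]; push_cast; ring
    -- left half
    have hleft : (∑ j ∈ Ico 0 (p+1), ((j:ℚ)-((p:ℚ)+1))^2 * Nat.choose (2*p+2) j) = T := by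
      rw [← Finset.range_eq_Ico]
      rw [← Finset.sum_range_reflect, hT]
      refine Finset.sum_congr rfl fun j hj => ?_
      rw [Finset.mem_range] at hj
      have hj' : j ≤ p := by omega
      have hcast : ((p+1-1-j : ℕ):ℚ) = (p:ℚ) - j := by
        have : p+1-1-j = p - j := by omega
        rw [this, Nat.cast_sub hj']
      have hsymm : Nat.choose (2*p+2) (p+1-1-j) = Nat.choose (2*p+2) (p+2+j) := by
        have h1 : p+1-1-j = (2*p+2) - (p+2+j) := by omega
        rw [h1, Nat.choose_symm (by omega)]
      rw [hsymm, hcast]; push_cast; ring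
    rw [← hsplit, hleft, hright]; ring
  -- conclude
  have hTval : T = ((p:ℚ)+1) * 4^p := by
    have : 2 * T = 2 * (((p:ℚ)+1) * 4^p) := by rw [← hST, hSval]; ring
    linarith
  have hgoal : ((∑ k ∈ Finset.Icc 1 (p+1), k ^ 2 * Nat.choose (2 * (p+1)) (p+1+k) : ℕ) : ℚ)
      = (((p+1) * 4 ^ (p+1-1) : ℕ) : ℚ) := by
    push_cast
    rw [show (2*(p+1)) = 2*p+2 by ring]
    rw [← Finset.Ico_add_one_right_eq_Icc, Finset.sum_Ico_eq_sum_range]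
    have : p+1+1-1 = p+1 := by omega
    rw [this, ← hTval, hT]
    refine Finset.sum_congr rfl fun j _ => ?_
    have : p+1+(1+j) = p+2+j := by omega
    rw [this]; push_cast; ring
  exact_mod_cast hgoal
end

section
/- Let A_n be the 2n×2n symmetric tridiagonal matrix with zero diagonal and off-diagonal entries √b_1, …, √b_{2n−1}, where b_{2k−1} = k(n−k+1) and b_{2k} = k(n−k). Then the characteristic polynomial of A_n equals ∏_{k=1}^{n} (x² − k²); equivalently, the eigenvalues of A_n are exactly ±1, ±2, …, ±n, each with multiplicity 1. -/
/-!
Expanding `det (X - A)` along the last row shows that the leading principal minors `P m` of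
the characteristic matrix satisfy `P (m + 2) = X * P (m + 1) - b (m + 1) * P m`.
In the basis `f j = ∏_{k = 1}^{j} (X² - k²)` the even and odd minors have the expansions
`P (2m) = ∑_{i + j = m} e m i * f j` and `P (2m + 1) = X * ∑_{i + j = m} o m i * f j`, where
`e m i = (-1)^i (m)_i² (n - m)^(i) / i!` and `o m i = (-1)^i (m)_i (m + 1)_i (n - m)^(i) / i!`
are built from falling and rising factorials. The recurrence reduces to two identities between these
coefficients, both consequences of `(x + 1)_i (x + 1 - i) = (x + 1) (x)_i`. At `m = n` the rising
factorial `(0)^(i)` kills every coefficient except `e n 0 = 1`, so `P (2n) = f n`.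
-/

open Polynomial Finset
open scoped Nat

noncomputable section

section

variable {R : Type*} [CommRing R]

def continuant (d c : ℕ → R) : ℕ → R
  | 0 => 1
  | 1 => d 0
  | m + 2 => d (m + 1) * continuant d c (m + 1) - c m * continuant d c m

namespace Matrix

def tridiagonal (d u v : ℕ → R) (m : ℕ) : Matrix (Fin m) (Fin m) R :=
  of fun i j =>
    if (i : ℕ) = j then d i else if (i : ℕ) + 1 = j then u i
    else if (j : ℕ) + 1 = i then v j else 0

lemma tridiagonal_apply_eq_zero {d u v : ℕ → R} {m : ℕ} {i j : Fin m}
    (h : (i : ℕ) + 1 < j ∨ (j : ℕ) + 1 < i) : tridiagonal d u v m i j = 0 := by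
  simp only [tridiagonal, of_apply]
  rw [if_neg (by omega), if_neg (by omega), if_neg (by omega)]

lemma tridiagonal_submatrix_castSucc (d u v : ℕ → R) (m : ℕ) :
    (tridiagonal d u v (m + 1)).submatrix Fin.castSucc Fin.castSucc = tridiagonal d u v m := by
  ext i j
  simp [tridiagonal]

lemma det_succ_of_last_column {k : ℕ} (M : Matrix (Fin (k + 1)) (Fin (k + 1)) R)
    (h : ∀ i, i ≠ Fin.last k → M i (Fin.last k) = 0) :
    M.det = M (Fin.last k) (Fin.last k) * (M.submatrix Fin.castSucc Fin.castSucc).det := by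
  rw [det_succ_column M (Fin.last k), Finset.sum_eq_single (Fin.last k)]
  · simp [Fin.succAbove_last, ← two_mul]
  · intro i _ hi
    rw [h i hi, mul_zero, zero_mul]
  · simp

theorem det_tridiagonal_add_two (d u v : ℕ → R) (m : ℕ) :
    (tridiagonal d u v (m + 2)).det =
      d (m + 1) * (tridiagonal d u v (m + 1)).det - u m * v m * (tridiagonal d u v m).det := by
  have hminor : ((tridiagonal d u v (m + 2)).submatrix Fin.castSucc
      (Fin.last m).castSucc.succAbove).det = u m * (tridiagonal d u v m).det := by
    rw [det_succ_of_last_column]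
    · congr 1
      · simp [tridiagonal]
      · congr 1
        ext i j
        simp [tridiagonal, Fin.succAbove_of_castSucc_lt _ _ (Fin.castSucc_lt_last j)]
    · intro i hi
      rw [submatrix_apply, Fin.succAbove_castSucc_self, Fin.succ_last]
      exact tridiagonal_apply_eq_zero (Or.inl (by simpa using Fin.val_lt_last hi))
  rw [det_succ_row _ (Fin.last (m + 1)), Fin.sum_univ_castSucc, Fin.sum_univ_castSucc,
    Finset.sum_eq_zero, zero_add]
  · have hdiag : tridiagonal d u v (m + 2) (Fin.last (m + 1)) (Fin.last (m + 1)) = d (m + 1) := by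
      simp [tridiagonal]
    have hsub : tridiagonal d u v (m + 2) (Fin.last (m + 1)) (Fin.last m).castSucc = v m := by
      simp only [tridiagonal, of_apply, Fin.val_last, Fin.val_castSucc]
      rw [if_neg (by omega), if_neg (by omega), if_pos trivial]
    have hodd : (-1 : R) ^ (m + 1 + m) = -1 := Odd.neg_one_pow ⟨m, by ring⟩
    have heven : (-1 : R) ^ (m + 1 + (m + 1)) = 1 := Even.neg_one_pow ⟨m + 1, rfl⟩
    simp only [Fin.succAbove_last, hminor, tridiagonal_submatrix_castSucc, hdiag, hsub,
      Fin.val_last, Fin.val_castSucc, hodd, heven]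
    ring
  · intro j _
    rw [tridiagonal_apply_eq_zero (Or.inr (by simp)), mul_zero, zero_mul]

theorem det_tridiagonal (d u v : ℕ → R) :
    ∀ m, (tridiagonal d u v m).det = continuant d (u * v) m
  | 0 => by simp [continuant]
  | 1 => by simp [tridiagonal, continuant]
  | m + 2 => by
    rw [det_tridiagonal_add_two, det_tridiagonal d u v (m + 1), det_tridiagonal d u v m]
    rfl

theorem charmatrix_tridiagonal (d u v : ℕ → R) (m : ℕ) :
    charmatrix (tridiagonal d u v m) =
      tridiagonal (fun i => X - C (d i)) (fun i => -C (u i)) (fun i => -C (v i)) m := by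
  ext i j
  by_cases h : i = j
  · subst h
    simp [tridiagonal]
  · have h' : (i : ℕ) ≠ j := Fin.val_ne_of_ne h
    simp only [charmatrix_apply_ne _ _ _ h, tridiagonal, of_apply, if_neg h']
    split_ifs <;> simp

end Matrix

lemma descPochhammer_eval_add_one_mul (j : ℕ) (x : R) :
    (descPochhammer R j).eval (x + 1) * (x + 1 - j) = (x + 1) * (descPochhammer R j).eval x := by
  rw [← descPochhammer_succ_eval, descPochhammer_succ_left, eval_mul, eval_comp]
  simp

lemma descPochhammer_eval_succ_left (i : ℕ) (x : R) :
    (descPochhammer R (i + 1)).eval x = x * (descPochhammer R i).eval (x - 1) := by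
  rw [descPochhammer_succ_left, eval_mul, eval_X, eval_comp, eval_sub, eval_X, eval_one]

lemma ascPochhammer_eval_succ_left (i : ℕ) (x : R) :
    (ascPochhammer R (i + 1)).eval x = x * (ascPochhammer R i).eval (x + 1) := by
  rw [ascPochhammer_succ_left, eval_mul, eval_X, eval_comp, eval_add, eval_X, eval_one]

variable (R) in
def sqDiffProd (j : ℕ) : R[X] := ∏ k ∈ Icc 1 j, (X ^ 2 - C ((k : R) ^ 2))

lemma X_sq_mul_sqDiffProd (j : ℕ) :
    X ^ 2 * sqDiffProd R j = sqDiffProd R (j + 1) + C (((j : R) + 1) ^ 2) * sqDiffProd R j := by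
  rw [sqDiffProd, sqDiffProd, prod_Icc_succ_top (by omega)]
  push_cast
  ring

def sqDiffExpand (a : ℕ → R) (m : ℕ) : R[X] :=
  ∑ p ∈ antidiagonal m, C (a p.1) * sqDiffProd R p.2

lemma sqDiffExpand_succ (a : ℕ → R) (m : ℕ) :
    sqDiffExpand a (m + 1) = C (a 0) * sqDiffProd R (m + 1) + sqDiffExpand (fun i => a (i + 1)) m :=
  Nat.sum_antidiagonal_succ

lemma X_sq_mul_sqDiffExpand (a : ℕ → R) (m : ℕ) :
    X ^ 2 * sqDiffExpand a m = sqDiffExpand a (m + 1) - C (a (m + 1)) +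
      sqDiffExpand (fun i => ((m : R) - i + 1) ^ 2 * a i) m := by
  rw [sqDiffExpand, sqDiffExpand, sqDiffExpand, Nat.sum_antidiagonal_succ', mul_sum,
    sqDiffProd, Icc_eq_empty (by omega), prod_empty, mul_one, add_sub_cancel_left,
    ← sum_add_distrib]
  refine sum_congr rfl fun p hp => ?_
  have hp2 : (p.2 : R) = m - p.1 := by
    rw [← mem_antidiagonal.1 hp]; push_cast; ring
  rw [mul_left_comm, X_sq_mul_sqDiffProd, hp2, C_mul]
  ring

end

section

variable {K : Type*} [Field K]

variable (K) in
def evenCoeff (n m i : ℕ) : K :=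
  (-1) ^ i * (descPochhammer K i).eval (m : K) ^ 2 * (ascPochhammer K i).eval ((n : K) - m) / i !

variable (K) in
def oddCoeff (n m i : ℕ) : K :=
  (-1) ^ i * ((descPochhammer K i).eval (m : K) * (descPochhammer K i).eval ((m : K) + 1)) *
    (ascPochhammer K i).eval ((n : K) - m) / i !

lemma evenCoeff_zero (n m : ℕ) : evenCoeff K n m 0 = 1 := by simp [evenCoeff]

lemma oddCoeff_zero (n m : ℕ) : oddCoeff K n m 0 = 1 := by simp [oddCoeff]

lemma oddCoeff_succ_self (n m : ℕ) : oddCoeff K n m (m + 1) = 0 := by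
  simp [oddCoeff, descPochhammer_eval_eq_descFactorial]

lemma evenCoeff_self_succ (n i : ℕ) : evenCoeff K n n (i + 1) = 0 := by
  simp [evenCoeff]

lemma oddCoeff_succ_succ [CharZero K] (n m i : ℕ) :
    oddCoeff K n (m + 1) (i + 1) =
      evenCoeff K n (m + 1) (i + 1) - (m + 1) * (n - (m + 1)) * oddCoeff K n m i := by
  have hkey := descPochhammer_eval_add_one_mul i (m : K)
  have e1 : (descPochhammer K (i + 1)).eval ((m : K) + 1) =
      (m + 1) * (descPochhammer K i).eval (m : K) := by
    rw [descPochhammer_eval_succ_left, add_sub_cancel_right]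
  have e2 : (descPochhammer K (i + 1)).eval ((m : K) + 1 + 1) =
      (m + 2) * (descPochhammer K i).eval ((m : K) + 1) := by
    rw [descPochhammer_eval_succ_left, add_sub_cancel_right]; ring
  have e3 : (ascPochhammer K (i + 1)).eval ((n : K) - (m + 1)) =
      (n - m - 1) * (ascPochhammer K i).eval ((n : K) - m) := by
    rw [ascPochhammer_eval_succ_left, show (n : K) - (m + 1) + 1 = n - m by ring]; ring
  have h0 : (i ! : K) ≠ 0 := Nat.cast_ne_zero.2 i.factorial_ne_zero
  have h1 : (i : K) + 1 ≠ 0 := by exact_mod_cast i.succ_ne_zero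
  simp only [evenCoeff, oddCoeff, Nat.factorial_succ, Nat.cast_mul, Nat.cast_succ, e1, e2, e3]
  field_simp
  linear_combination (-(-1 : K) ^ i * ((n : K) - m - 1) * (ascPochhammer K i).eval ((n : K) - m)
    * (descPochhammer K i).eval (m : K)) * hkey

lemma evenCoeff_succ_succ [CharZero K] (n m i : ℕ) :
    evenCoeff K n (m + 1) (i + 1) =
      oddCoeff K n m (i + 1) + ((m : K) - i + 1) ^ 2 * oddCoeff K n m i -
        (m + 1) * (n - m) * evenCoeff K n m i := by
  have hkey := descPochhammer_eval_add_one_mul i (m : K)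
  have e1 : (descPochhammer K (i + 1)).eval ((m : K) + 1) =
      (m + 1) * (descPochhammer K i).eval (m : K) := by
    rw [descPochhammer_eval_succ_left, add_sub_cancel_right]
  have e3 : (ascPochhammer K (i + 1)).eval ((n : K) - (m + 1)) =
      (n - m - 1) * (ascPochhammer K i).eval ((n : K) - m) := by
    rw [ascPochhammer_eval_succ_left, show (n : K) - (m + 1) + 1 = n - m by ring]; ring
  have h0 : (i ! : K) ≠ 0 := Nat.cast_ne_zero.2 i.factorial_ne_zero
  have h1 : (i : K) + 1 ≠ 0 := by exact_mod_cast i.succ_ne_zero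
  simp only [evenCoeff, oddCoeff, Nat.factorial_succ, Nat.cast_mul, Nat.cast_succ, e1, e3,
    descPochhammer_succ_eval, ascPochhammer_succ_eval]
  field_simp
  linear_combination (-(-1 : K) ^ i * (ascPochhammer K i).eval ((n : K) - m)
    * (descPochhammer K i).eval (m : K) * ((i : K) + 1) * ((m : K) + 1 - i)) * hkey

lemma sqDiffExpand_evenCoeff_succ [CharZero K] (n m : ℕ) :
    sqDiffExpand (evenCoeff K n (m + 1)) (m + 1) =
      X * (X * sqDiffExpand (oddCoeff K n m) m) -
        C (((m : K) + 1) * (n - m)) * sqDiffExpand (evenCoeff K n m) m := by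
  rw [← mul_assoc, ← sq, X_sq_mul_sqDiffExpand, sqDiffExpand_succ, sqDiffExpand_succ,
    oddCoeff_succ_self, evenCoeff_zero, oddCoeff_zero, C_0, sub_zero, add_assoc, add_sub_assoc]
  congr 1
  simp only [sqDiffExpand, mul_sum, ← sum_add_distrib, ← sum_sub_distrib]
  refine sum_congr rfl fun p _ => ?_
  rw [evenCoeff_succ_succ]
  simp only [C_add, C_sub, C_mul]
  ring

lemma sqDiffExpand_oddCoeff_succ [CharZero K] (n m : ℕ) :
    sqDiffExpand (oddCoeff K n (m + 1)) (m + 1) =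
      sqDiffExpand (evenCoeff K n (m + 1)) (m + 1) -
        C (((m : K) + 1) * (n - (m + 1))) * sqDiffExpand (oddCoeff K n m) m := by
  rw [sqDiffExpand_succ, sqDiffExpand_succ, oddCoeff_zero, evenCoeff_zero, add_sub_assoc]
  congr 1
  simp only [sqDiffExpand, mul_sum, ← sum_sub_distrib]
  refine sum_congr rfl fun p _ => ?_
  rw [oddCoeff_succ_succ]
  simp only [C_sub, C_mul]
  ring

lemma sqDiffExpand_evenCoeff_self (n : ℕ) :
    sqDiffExpand (evenCoeff K n n) n = sqDiffProd K n := by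
  rw [sqDiffExpand, sum_eq_single (0, n)]
  · rw [evenCoeff_zero, C_1, one_mul]
  · rintro ⟨_ | i, j⟩ hp hne
    · simp_all
    · rw [evenCoeff_self_succ, C_0, zero_mul]
  · simp

theorem continuant_eq_sqDiffExpand [CharZero K] {n : ℕ} {c : ℕ → K}
    (hc_even : ∀ m < n, c (2 * m) = (m + 1) * (n - m))
    (hc_odd : ∀ m, m + 1 < n → c (2 * m + 1) = (m + 1) * (n - (m + 1)))
    {m : ℕ} (hm : m ≤ n) :
    continuant (fun _ => X) (fun i => C (c i)) (2 * m) = sqDiffExpand (evenCoeff K n m) m ∧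
      (m < n → continuant (fun _ => X) (fun i => C (c i)) (2 * m + 1) =
        X * sqDiffExpand (oddCoeff K n m) m) := by
  induction m with
  | zero => simp [continuant, sqDiffExpand, sqDiffProd, evenCoeff_zero, oddCoeff_zero]
  | succ m ih =>
    obtain ⟨heven, hodd⟩ := ih (by omega)
    have heven' : continuant (fun _ => X) (fun i => C (c i)) (2 * (m + 1)) =
        sqDiffExpand (evenCoeff K n (m + 1)) (m + 1) := by
      rw [show 2 * (m + 1) = 2 * m + 2 by ring, continuant, heven, hodd (by omega),
        hc_even m (by omega), sqDiffExpand_evenCoeff_succ]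
    refine ⟨heven', fun hlt => ?_⟩
    rw [show 2 * (m + 1) + 1 = 2 * m + 1 + 2 by ring, continuant,
      show 2 * m + 1 + 1 = 2 * (m + 1) by ring, heven', hodd (by omega), hc_odd m (by omega),
      sqDiffExpand_oddCoeff_succ]
    ring

end

end

open Polynomial Matrix in
theorem stmt_9_general (n : ℕ) (b : ℕ → ℝ)
    (hb1 : ∀ k : ℕ, 1 ≤ k → k ≤ n → b (2 * k - 1) = k * (n - k + 1))
    (hb2 : ∀ k : ℕ, 1 ≤ k → k ≤ n - 1 → b (2 * k) = k * (n - k))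
    (A : Matrix (Fin (2 * n)) (Fin (2 * n)) ℝ)
    (hA : ∀ i j : Fin (2 * n),
      A i j = if (i : ℕ) + 1 = j ∨ (j : ℕ) + 1 = i
        then Real.sqrt (b (min (i : ℕ) (j : ℕ) + 1)) else 0) :
    A.charpoly = ∏ k ∈ Finset.Icc 1 n,
      (Polynomial.X ^ 2 - Polynomial.C ((k : ℝ) ^ 2)) := by
  set w : ℕ → ℝ := fun i => √(b (i + 1))
  have hA' : A = tridiagonal 0 w w (2 * n) := by
    ext i j
    rw [hA]
    simp only [tridiagonal, of_apply, w]
    split_ifs <;> first | rfl | omega | (congr 2; omega)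
  have hw_even : ∀ m < n, w (2 * m) ^ 2 = (m + 1) * (n - m) := by
    intro m hm
    have hb : b (2 * m + 1) = (m + 1) * (n - m) := by
      rw [show 2 * m + 1 = 2 * (m + 1) - 1 by omega, hb1 (m + 1) (by omega) (by omega)]
      push_cast
      ring
    have : (m : ℝ) + 1 ≤ n := by exact_mod_cast hm
    rw [Real.sq_sqrt (by rw [hb]; nlinarith), hb]
  have hw_odd : ∀ m, m + 1 < n → w (2 * m + 1) ^ 2 = (m + 1) * (n - (m + 1)) := by
    intro m hm
    have hb : b (2 * m + 1 + 1) = (m + 1) * (n - (m + 1)) := by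
      simpa [mul_add] using hb2 (m + 1) (by omega) (by omega)
    have : (m : ℝ) + 1 ≤ n := by exact_mod_cast hm.le
    rw [Real.sq_sqrt (by rw [hb]; nlinarith), hb]
  have hweights : (fun i => -C (w i)) * (fun i => -C (w i)) = fun i => C (w i ^ 2) := by
    ext1 i
    simp [sq]
  rw [charpoly, hA', charmatrix_tridiagonal, det_tridiagonal, hweights]
  simpa [sqDiffExpand_evenCoeff_self, sqDiffProd] using
    (continuant_eq_sqDiffExpand (c := fun i => w i ^ 2) hw_even hw_odd le_rfl).1

open Polynomial Matrix in
theorem stmt_9 (n : ℕ) (hn : 0 < n) (b : ℕ → ℝ)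
    (hb1 : ∀ k : ℕ, 1 ≤ k → k ≤ n → b (2 * k - 1) = k * (n - k + 1))
    (hb2 : ∀ k : ℕ, 1 ≤ k → k ≤ n - 1 → b (2 * k) = k * (n - k))
    (A : Matrix (Fin (2 * n)) (Fin (2 * n)) ℝ)
    (hA : ∀ i j : Fin (2 * n),
      A i j = if (i : ℕ) + 1 = j ∨ (j : ℕ) + 1 = i
        then Real.sqrt (b (min (i : ℕ) (j : ℕ) + 1)) else 0) :
    A.charpoly = ∏ k ∈ Finset.Icc 1 n,
      (Polynomial.X ^ 2 - Polynomial.C ((k : ℝ) ^ 2)) :=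
  stmt_9_general n b hb1 hb2 A hA
end

section
/- Define polynomial sequences p_k^{(n)}, q_k^{(n)} by p_0^{(n)} = 1, q_0^{(n)} = x, p_k^{(n)} = x·q_{k−1}^{(n)} − k(n−k+1)·p_{k−1}^{(n)} for 1 ≤ k ≤ n, and q_k^{(n)} = x·p_k^{(n)} − k(n−k)·q_{k−1}^{(n)} for 1 ≤ k ≤ n−1. Then for all 1 ≤ k ≤ n: p_k^{(n+1)} = p_k^{(n)} − k²·p_{k−1}^{(n)} and (for k ≤ n−1) q_k^{(n+1)} = q_k^{(n)} − k(k+1)·q_{k−1}^{(n)}. -/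
open Polynomial in
theorem stmt_10 (p q : ℕ → ℕ → Polynomial ℤ)
    (hp0 : ∀ n, p n 0 = 1) (hq0 : ∀ n, q n 0 = Polynomial.X)
    (hp : ∀ n k : ℕ, 1 ≤ k → k ≤ n →
      p n k = Polynomial.X * q n (k - 1) -
        Polynomial.C ((k : ℤ) * ((n : ℤ) - k + 1)) * p n (k - 1))
    (hq : ∀ n k : ℕ, 1 ≤ k → k ≤ n - 1 →
      q n k = Polynomial.X * p n k -
        Polynomial.C ((k : ℤ) * ((n : ℤ) - k)) * q n (k - 1)) :
    ∀ n k : ℕ, 1 ≤ k → k ≤ n →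
      (p (n + 1) k = p n k - Polynomial.C ((k : ℤ) ^ 2) * p n (k - 1)) ∧
      (k ≤ n - 1 →
        q (n + 1) k = q n k - Polynomial.C ((k : ℤ) * (k + 1)) * q n (k - 1)) := by
  intro n k
  induction k with
  | zero => intro h; omega
  | succ m ih =>
    intro _ hkn
    rcases Nat.eq_zero_or_pos m with hm | hm
    · subst hm
      have e1 := hp (n+1) 1 le_rfl (by omega)
      have e2 := hp n 1 le_rfl (by omega)
      simp only [Nat.sub_self] at e1 e2 ⊢
      have Hp : p (n + 1) 1 = p n 1 - Polynomial.C ((1 : ℤ) ^ 2) * p n 0 := by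
        rw [e1, e2, hq0, hq0, hp0, hp0]
        push_cast
        simp only [map_mul, map_add, map_sub, map_one]
        ring
      refine ⟨Hp, fun hk1 => ?_⟩
      have e3 := hq (n+1) 1 le_rfl (by omega)
      have e4 := hq n 1 le_rfl hk1
      simp only [Nat.sub_self] at e3 e4
      rw [e3, e4, hq0, hq0, Hp, hp0]
      push_cast
      simp only [map_mul, map_add, map_sub, map_one, map_ofNat]
      ring
    · obtain ⟨ihp, ihq⟩ := ih hm (by omega)
      have ihq' := ihq (by omega)
      have e1 := hp (n+1) (m+1) (by omega) (by omega)
      have e2 := hp n (m+1) (by omega) hkn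
      have e3 := hp n m hm (by omega)
      simp only [Nat.add_sub_cancel] at e1 e2 ⊢
      have Hp : p (n + 1) (m + 1) =
          p n (m + 1) - Polynomial.C (((m+1 : ℕ) : ℤ) ^ 2) * p n m := by
        rw [e1, e2, ihp, ihq', e3]
        push_cast
        simp only [map_mul, map_add, map_sub, map_one, map_pow]
        ring
      refine ⟨Hp, fun hk1 => ?_⟩
      · 
        have f1 := hq (n+1) (m+1) (by omega) (by omega)
        have f2 := hq n (m+1) (by omega) hk1
        have f3 := hq n m hm (by omega)
        simp only [Nat.add_sub_cancel] at f1 f2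
        rw [f1, f2, Hp, ihq', f3]
        push_cast
        simp only [map_mul, map_add, map_sub, map_one, map_pow]
        ring
end

section
/- With p_k^{(n)}, q_k^{(n)} defined by p_0^{(n)} = 1, q_0^{(n)} = x, p_k^{(n)} = x·q_{k−1}^{(n)} − k(n−k+1)·p_{k−1}^{(n)}, q_k^{(n)} = x·p_k^{(n)} − k(n−k)·q_{k−1}^{(n)}, the identity p_{n+1}^{(n+1)} = (x² − (n+1)²)·p_n^{(n)} holds for all n ≥ 0; consequently p_n^{(n)} = ∏_{k=1}^{n}(x² − k²). -/
open Polynomial in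
theorem stmt_11 (p q : ℕ → ℕ → Polynomial ℤ)
    (hp0 : ∀ n, p n 0 = 1) (hq0 : ∀ n, q n 0 = Polynomial.X)
    (hp : ∀ n k : ℕ, 1 ≤ k → k ≤ n →
      p n k = Polynomial.X * q n (k - 1) -
        Polynomial.C ((k : ℤ) * ((n : ℤ) - k + 1)) * p n (k - 1))
    (hq : ∀ n k : ℕ, 1 ≤ k → k ≤ n - 1 →
      q n k = Polynomial.X * p n k -
        Polynomial.C ((k : ℤ) * ((n : ℤ) - k)) * q n (k - 1)) :
    (∀ n : ℕ, p (n + 1) (n + 1) =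
      (Polynomial.X ^ 2 - Polynomial.C (((n : ℤ) + 1) ^ 2)) * p n n) ∧
    (∀ n : ℕ, p n n = ∏ k ∈ Finset.Icc 1 n,
      (Polynomial.X ^ 2 - Polynomial.C ((k : ℤ) ^ 2))) := by
  have main : ∀ k : ℕ, ∀ n : ℕ,
      (k + 1 ≤ n → p (n+1) (k+1) = p n (k+1) - C (((k:ℤ)+1)^2) * p n k) ∧
      (k + 2 ≤ n → q (n+1) (k+1) = q n (k+1) - C (((k:ℤ)+1)*((k:ℤ)+2)) * q n k) := by
    intro k
    induction k with
    | zero =>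
      intro n
      constructor
      · intro h
        have h1 := hp (n+1) 1 le_rfl (by omega)
        have h2 := hp n 1 le_rfl h
        simp only [Nat.sub_self] at h1 h2
        rw [h1, h2, hp0, hq0, hp0, hq0]
        push_cast
        simp only [map_mul, map_add, map_sub, map_one, map_zero, map_pow, map_ofNat]
        ring
      · intro h
        have h1 := hq (n+1) 1 le_rfl (by omega)
        have h2 := hq n 1 le_rfl (by omega)
        have h3 := hp (n+1) 1 le_rfl (by omega)
        have h4 := hp n 1 le_rfl (by omega)
        simp only [Nat.sub_self] at h1 h2 h3 h4
        rw [h1, h2, h3, h4, hp0, hq0, hp0, hq0]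
        push_cast
        simp only [map_mul, map_add, map_sub, map_one, map_zero, map_pow, map_ofNat]
        ring
    | succ k ih =>
      intro n
      have hP : k + 1 + 1 ≤ n → p (n+1) (k+1+1) = p n (k+1+1) - C (((k:ℤ)+1+1)^2) * p n (k+1) := by
        intro h
        have h1 := hp (n+1) (k+2) (by omega) (by omega)
        have h2 := hp n (k+2) (by omega) (by omega)
        have h3 := hp n (k+1) (by omega) (by omega)
        have h4 := (ih n).1 (by omega)
        have h5 := (ih n).2 (by omega)
        simp only [show k+2-1 = k+1 from rfl, show k+1-1 = k from rfl] at h1 h2 h3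
        rw [show k+1+1 = k+2 from rfl, h1, h2, h4, h5]
        push_cast
        push_cast at h3
        simp only [map_mul, map_add, map_sub, map_one, map_zero, map_pow, map_ofNat] at h3 ⊢
        linear_combination ((C (k:ℤ) + 1) * (C (k:ℤ) + 2)) * h3
      constructor
      · exact hP
      · intro h
        have h1 := hq (n+1) (k+2) (by omega) (by omega)
        have h2 := hq n (k+2) (by omega) (by omega)
        have h3 := hq n (k+1) (by omega) (by omega)
        have h4 := hP (by omega)
        have h5 := (ih n).2 (by omega)
        simp only [show k+2-1 = k+1 from rfl, show k+1-1 = k from rfl] at h1 h2 h3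
        rw [show k+1+1 = k+2 from rfl] at h4 ⊢
        rw [h1, h2, h4, h5]
        push_cast
        push_cast at h3
        simp only [map_mul, map_add, map_sub, map_one, map_zero, map_pow, map_ofNat] at h3 ⊢
        linear_combination ((C (k:ℤ) + 2) * (C (k:ℤ) + 2)) * h3
  have part1 : ∀ n : ℕ, p (n + 1) (n + 1) =
      (X ^ 2 - C (((n : ℤ) + 1) ^ 2)) * p n n := by
    intro n
    match n with
    | 0 =>
      have h1 := hp 1 1 le_rfl le_rfl
      simp only [Nat.sub_self] at h1
      rw [h1, hp0, hq0, hp0]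
      push_cast
      simp only [map_mul, map_add, map_sub, map_one, map_zero, map_pow, map_ofNat]
      ring
    | 1 =>
      have h1 := hp 2 2 (by omega) le_rfl
      have h2 := hq 2 1 le_rfl (by omega)
      have h3 := hp 2 1 le_rfl (by omega)
      have h4 := hp 1 1 le_rfl le_rfl
      simp only [show 2-1 = 1 from rfl, Nat.sub_self] at h1 h2 h3 h4
      rw [h1, h2, h3, h4, hp0, hq0, hp0, hq0]
      push_cast
      simp only [map_mul, map_add, map_sub, map_one, map_zero, map_pow, map_ofNat]
      ring
    | (m+2) =>
      have h1 := hp (m+3) (m+3) (by omega) le_rfl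
      have h2 := hq (m+3) (m+2) (by omega) (by omega)
      have h3 := (main (m+1) (m+2)).1 (by omega)
      have h4 := (main m (m+2)).2 (by omega)
      have h5 := hp (m+2) (m+2) (by omega) le_rfl
      have h6 := hq (m+2) (m+1) (by omega) (by omega)
      simp only [show m+3-1 = m+2 from rfl, show m+2-1 = m+1 from rfl,
        show m+1-1 = m from rfl, show m+1+1 = m+2 from rfl,
        show m+2+1 = m+3 from rfl] at h1 h2 h3 h4 h5 h6
      rw [h1, h2, h3, h4, h5, h6]
      push_cast
      simp only [map_mul, map_add, map_sub, map_one, map_zero, map_pow, map_ofNat]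
      ring
  refine ⟨part1, ?_⟩
  intro n
  induction n with
  | zero => simp [hp0]
  | succ n ih =>
    rw [part1 n, ih, Finset.prod_Icc_succ_top (by omega)]
    push_cast
    ring
end

section
/- Let M be the 4×4 symmetric matrix with M_{01} = −1, M_{12} = M_{23} = M_{30} = 1 (and symmetric entries, zeros elsewhere: the weighted adjacency matrix of a 4-cycle with one edge of weight −1). Then (e^{itM})_{0,2} = 0 and (e^{itM})_{1,3} = 0 for all real t. -/
/-! Since `M ^ 2 = 2`, every power of `M` lies in the span of `1` and `M`; this span is a
closed subspace, so it also contains `exp (i t M)` (explicitly `cos (√2 t) + i sin (√2 t) / √2 • M`).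
The entries `(0, 2)` and `(1, 3)` vanish on `1` and on `M`, hence on the whole span. -/

open Submodule

theorem pow_mem_span_one_self_of_sq_eq_algebraMap {R A : Type*} [CommRing R] [Ring A]
    [Algebra R A] {x : A} {c : R} (hx : x ^ 2 = algebraMap R A c) (n : ℕ) :
    x ^ n ∈ span R {1, x} := by
  induction n with
  | zero => exact subset_span (by simp)
  | succ n ih =>
    obtain ⟨a, b, hab⟩ := mem_span_pair.1 ih
    refine mem_span_pair.2 ⟨b * c, a, ?_⟩
    rw [pow_succ, ← hab, add_mul, smul_mul_assoc, smul_mul_assoc, one_mul, ← sq, hx,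
      Algebra.algebraMap_eq_smul_one, smul_smul, add_comm]

namespace NormedSpace

theorem exp_mem_of_pow_mem {𝕂 𝔸 : Type*} [Field 𝕂] [CharZero 𝕂] [Ring 𝔸] [Algebra 𝕂 𝔸]
    [TopologicalSpace 𝔸] [IsTopologicalRing 𝔸] {s : Submodule 𝕂 𝔸}
    (hs : IsClosed (s : Set 𝔸)) {x : 𝔸} (h : ∀ n, x ^ n ∈ s) : exp x ∈ s := by
  rw [exp_eq_tsum 𝕂]
  exact tsum_mem hs fun n => s.smul_mem _ (h n)

theorem exp_smul_mem_span_one_self_of_sq_eq_algebraMap {𝕂 𝔸 : Type*}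
    [NontriviallyNormedField 𝕂] [CompleteSpace 𝕂] [CharZero 𝕂] [Ring 𝔸] [Algebra 𝕂 𝔸]
    [TopologicalSpace 𝔸] [IsTopologicalRing 𝔸] [ContinuousSMul 𝕂 𝔸] [T2Space 𝔸]
    {x : 𝔸} {c : 𝕂} (hx : x ^ 2 = algebraMap 𝕂 𝔸 c) (s : 𝕂) :
    exp (s • x) ∈ span 𝕂 {1, x} :=
  have := FiniteDimensional.span_of_finite 𝕂 (Set.toFinite {1, x})
  exp_mem_of_pow_mem (closed_of_finiteDimensional _) fun n => by
    rw [smul_pow]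
    exact smul_mem _ _ (pow_mem_span_one_self_of_sq_eq_algebraMap hx n)

end NormedSpace

open Matrix Complex in
theorem stmt_12 (M : Matrix (Fin 4) (Fin 4) ℂ)
    (hM : M = !![0, -1, 0, 1; -1, 0, 1, 0; 0, 1, 0, 1; 1, 0, 1, 0]) :
    ∀ t : ℝ, (NormedSpace.exp ((Complex.I * t) • M)) 0 2 = 0 ∧
      (NormedSpace.exp ((Complex.I * t) • M)) 1 3 = 0 := by
  intro t
  have hM_sq : M ^ 2 = algebraMap ℂ _ 2 := by
    subst hM
    ext i j
    fin_cases i <;> fin_cases j <;>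
      simp [sq, mul_apply, Fin.sum_univ_four, algebraMap_matrix_apply] <;> norm_num
  obtain ⟨a, b, hab⟩ := mem_span_pair.1
    (NormedSpace.exp_smul_mem_span_one_self_of_sq_eq_algebraMap hM_sq (I * t))
  rw [← hab, hM]
  simp
end

section
/- For the graph G_n whose adjacency matrix A is the block matrix [[0, J_{2×n}, 0], [J_{n×2}, 0, I_n], [0, I_n, 0]], the sum over all spectral idempotents E_r of |(E_r)_{u,v}| (u, v the two vertices of the first block) equals 2n/(2n+1); in particular this quantity tends to 1 as n → ∞. -/
/-! By the spectral decomposition, `(A ^ k) u v = ∑ r, θ r ^ k * E r u v`, while the left side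
counts the walks of length `k` from `u` to `v`: `0, 0, n, 0, 2n² + n` for `k = 0, …, 4`. For
`n ≥ 1` the five eigenvalues are distinct, so this Vandermonde system determines the entries
`E r u v = n/(2(2n+1)), n/(2(2n+1)), 0, 0, -n/(2n+1)`. -/

open Finset Matrix

theorem CompleteOrthogonalIdempotents.sum_smul_pow {ι R M : Type*} [Fintype ι]
    [CommSemiring R] [Semiring M] [Algebra R M] {E : ι → M}
    (hE : CompleteOrthogonalIdempotents E) (θ : ι → R) (k : ℕ) :
    (∑ r, θ r • E r) ^ k = ∑ r, θ r ^ k • E r := by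
  classical
  induction k with
  | zero => simp [hE.complete]
  | succ k ih =>
    rw [pow_succ, ih, sum_mul_sum]
    refine sum_congr rfl fun r _ => ?_
    simp_rw [smul_mul_smul_comm, hE.mul_eq, smul_ite, smul_zero, sum_ite_eq, mem_univ,
      if_true, pow_succ]

theorem sum_ite_eq_card_Ico {N a b : ℕ} (hb : b ≤ N) {p : Fin N → Prop} [DecidablePred p]
    (hp : ∀ j, p j ↔ a ≤ (j : ℕ) ∧ (j : ℕ) < b) :
    ∑ j, (if p j then (1 : ℝ) else 0) = (b - a : ℕ) := by
  simp_rw [hp]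
  rw [Fin.sum_univ_eq_sum_range (fun j => if a ≤ j ∧ j < b then (1 : ℝ) else 0), sum_boole,
    ← Nat.card_Ico]
  congr 2
  ext j
  simp only [mem_filter, mem_range, mem_Ico]
  omega

-- Vertices `0, 1` are `u, v`; `2, …, n + 1` form the middle block, and `j + n` is the
-- pendant vertex attached to the middle vertex `j`.
def gnAdj (n : ℕ) : Matrix (Fin (2 * n + 2)) (Fin (2 * n + 2)) ℝ := fun i j =>
  if ((i : ℕ) < 2 ∧ 2 ≤ (j : ℕ) ∧ (j : ℕ) < n + 2) ∨
     ((j : ℕ) < 2 ∧ 2 ≤ (i : ℕ) ∧ (i : ℕ) < n + 2) ∨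
     (2 ≤ (i : ℕ) ∧ (i : ℕ) < n + 2 ∧ (j : ℕ) = (i : ℕ) + n) ∨
     (2 ≤ (j : ℕ) ∧ (j : ℕ) < n + 2 ∧ (i : ℕ) = (j : ℕ) + n)
  then 1 else 0

namespace gnAdj

variable {n : ℕ}

theorem isSymm : (gnAdj n).IsSymm :=
  ext fun i j => by simp only [transpose_apply, gnAdj]; exact if_congr (by tauto) rfl rfl

theorem apply_of_lt_two {i : Fin (2 * n + 2)} (hi : (i : ℕ) < 2) (j : Fin (2 * n + 2)) :
    gnAdj n i j = if 2 ≤ (j : ℕ) ∧ (j : ℕ) < n + 2 then 1 else 0 := by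
  unfold gnAdj; exact if_congr (by omega) rfl rfl

theorem apply_of_middle {j : Fin (2 * n + 2)} (h2 : 2 ≤ (j : ℕ)) (hj : (j : ℕ) < n + 2)
    (m : Fin (2 * n + 2)) :
    gnAdj n j m = if (m : ℕ) < 2 ∨ (m : ℕ) = j + n then 1 else 0 := by
  unfold gnAdj; have := m.isLt; exact if_congr (by omega) rfl rfl

theorem sq_apply_of_lt_two {i : Fin (2 * n + 2)} (hi : (i : ℕ) < 2) (m : Fin (2 * n + 2)) :
    (gnAdj n ^ 2) i m =
      if (m : ℕ) < 2 then (n : ℝ) else if (m : ℕ) < n + 2 then 0 else 1 := by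
  have hm := m.isLt
  have hterm : ∀ j, gnAdj n i j * gnAdj n j m =
      if 2 ≤ (j : ℕ) ∧ (j : ℕ) < n + 2 ∧ ((m : ℕ) < 2 ∨ (m : ℕ) = j + n) then 1 else 0 := by
    intro j
    rw [apply_of_lt_two hi]
    by_cases hj : 2 ≤ (j : ℕ) ∧ (j : ℕ) < n + 2
    · rw [if_pos hj, apply_of_middle hj.1 hj.2, one_mul]
      exact if_congr (by tauto) rfl rfl
    · rw [if_neg hj, zero_mul, if_neg (by tauto)]
  rw [sq, mul_apply]
  simp_rw [hterm]
  split_ifs with h2 hmid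
  · simpa using sum_ite_eq_card_Ico (a := 2) (b := n + 2) (by omega) (fun j => by omega)
  · refine sum_eq_zero fun j _ => if_neg ?_
    omega
  · simpa using sum_ite_eq_card_Ico (a := m - n) (b := m - n + 1) (by omega) (fun j => by omega)

theorem zero_one : gnAdj n 0 1 = 0 := by
  rw [apply_of_lt_two (by simp)]; simp

theorem sq_zero_one : (gnAdj n ^ 2) 0 1 = n := by
  rw [sq_apply_of_lt_two (by simp)]; simp

theorem pow_three_zero_one : (gnAdj n ^ 3) 0 1 = 0 := by
  rw [pow_succ, mul_apply]
  refine sum_eq_zero fun m _ => ?_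
  rw [sq_apply_of_lt_two (by simp), isSymm.apply, apply_of_lt_two (by simp)]
  split_ifs <;> first | omega | simp

theorem pow_four_zero_one : (gnAdj n ^ 4) 0 1 = 2 * n ^ 2 + n := by
  have hterm : ∀ m : Fin (2 * n + 2), (gnAdj n ^ 2) 0 m * (gnAdj n ^ 2) m 1 =
      n ^ 2 * (if 0 ≤ (m : ℕ) ∧ (m : ℕ) < 2 then 1 else 0) +
        (if n + 2 ≤ (m : ℕ) ∧ (m : ℕ) < 2 * n + 2 then 1 else 0) := by
    intro m
    have hm := m.isLt
    rw [(isSymm.pow 2).apply 1 m, sq_apply_of_lt_two (i := 0) (by simp),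
      sq_apply_of_lt_two (i := 1) (by simp)]
    split_ifs <;> first | omega | ring
  rw [show 4 = 2 + 2 from rfl, pow_add, mul_apply]
  simp_rw [hterm]
  rw [sum_add_distrib, ← mul_sum, sum_ite_eq_card_Ico (by omega) (fun _ => Iff.rfl),
    sum_ite_eq_card_Ico le_rfl (fun _ => Iff.rfl)]
  push_cast [show 2 * n + 2 - (n + 2) = n by omega]
  ring

end gnAdj

noncomputable def gnEigenvalue (n : ℕ) : Fin 5 → ℝ :=
  ![√(2 * n + 1), -√(2 * n + 1), 1, -1, 0]

theorem eq_of_gnEigenvalue_moments {n : ℕ} (hn : 1 ≤ n) {x : Fin 5 → ℝ}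
    (h0 : ∑ r, gnEigenvalue n r ^ 0 * x r = 0) (h1 : ∑ r, gnEigenvalue n r ^ 1 * x r = 0)
    (h2 : ∑ r, gnEigenvalue n r ^ 2 * x r = n) (h3 : ∑ r, gnEigenvalue n r ^ 3 * x r = 0)
    (h4 : ∑ r, gnEigenvalue n r ^ 4 * x r = 2 * n ^ 2 + n) :
    x = ![(n : ℝ) / (2 * (2 * n + 1)), n / (2 * (2 * n + 1)), 0, 0, -(n / (2 * n + 1))] := by
  simp only [Fin.sum_univ_five, gnEigenvalue, Matrix.cons_val] at h0 h1 h2 h3 h4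
  set s := √(2 * n + 1)
  have hn₀ : (0 : ℝ) < n := by exact_mod_cast hn
  have hs : s ^ 2 = 2 * n + 1 := Real.sq_sqrt (by positivity)
  have hs4 : s ^ 4 = (2 * n + 1) ^ 2 := by rw [← hs]; ring
  have h01 : x 0 = x 1 := by
    have : s * (2 * n) * (x 0 - x 1) = 0 := by
      linear_combination h3 - h1 - s * (x 0 - x 1) * hs
    have hs0 : 0 < s := by positivity
    linarith [(mul_eq_zero.mp this).resolve_left (by positivity)]
  have h23 : x 2 = x 3 := by linear_combination h1 - s * h01
  rw [← h01, ← h23] at h0 h2 h4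
  have hx0 : x 0 * (2 * (2 * n + 1)) = n := by
    have : 2 * n * (x 0 * (2 * (2 * n + 1)) - n) = 0 := by
      linear_combination h4 - h2 - 2 * x 0 * hs4 + 2 * x 0 * hs
    linarith [(mul_eq_zero.mp this).resolve_left (by positivity)]
  have hx2 : x 2 = 0 := by linear_combination (h2 - 2 * x 0 * hs - hx0) / 2
  have hx4 : x 4 * (2 * n + 1) = -n := by linear_combination (2 * n + 1) * (h0 - 2 * hx2) - hx0
  ext r
  fin_cases r <;> simp [← h01, ← h23, hx2, eq_div_of_mul_eq (by positivity) hx0,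
    eq_div_of_mul_eq (by positivity) hx4, neg_div]

theorem tendsto_two_mul_natCast_div_two_mul_add_one :
    Filter.Tendsto (fun m : ℕ => (2 * m : ℝ) / (2 * m + 1)) Filter.atTop (nhds 1) := by
  simpa [Function.comp_def] using
    (tendsto_natCast_div_add_atTop (1 : ℝ)).comp (Filter.tendsto_id.const_mul_atTop' two_pos)

open Matrix in
theorem stmt_14_general (n : ℕ) (hn : 1 ≤ n)
    (A : Matrix (Fin (2 * n + 2)) (Fin (2 * n + 2)) ℝ)
    (hA : ∀ i j : Fin (2 * n + 2), A i j =
      if ((i : ℕ) < 2 ∧ 2 ≤ (j : ℕ) ∧ (j : ℕ) < n + 2) ∨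
         ((j : ℕ) < 2 ∧ 2 ≤ (i : ℕ) ∧ (i : ℕ) < n + 2) ∨
         (2 ≤ (i : ℕ) ∧ (i : ℕ) < n + 2 ∧ (j : ℕ) = (i : ℕ) + n) ∨
         (2 ≤ (j : ℕ) ∧ (j : ℕ) < n + 2 ∧ (i : ℕ) = (j : ℕ) + n)
      then 1 else 0)
    (E : Fin 5 → Matrix (Fin (2 * n + 2)) (Fin (2 * n + 2)) ℝ)
    (horth : ∀ r s, E r * E s = if r = s then E r else 0)
    (hsum : ∑ r, E r = 1)
    (hdec : A = ∑ r,
      (![Real.sqrt (2 * n + 1), -Real.sqrt (2 * n + 1), 1, -1, 0] r) • E r) :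
    ∑ r, |E r 0 1| = 2 * n / (2 * n + 1) ∧
    Filter.Tendsto (fun m : ℕ => (2 * m : ℝ) / (2 * m + 1))
      Filter.atTop (nhds 1) := by
  refine ⟨?_, tendsto_two_mul_natCast_div_two_mul_add_one⟩
  obtain rfl : A = gnAdj n := Matrix.ext hA
  have hE : CompleteOrthogonalIdempotents E :=
    ⟨OrthogonalIdempotents.iff_mul_eq.mpr horth, hsum⟩
  have hmoment (k : ℕ) : ∑ r, gnEigenvalue n r ^ k * E r 0 1 = (gnAdj n ^ k) 0 1 := by
    rw [show gnAdj n = ∑ r, gnEigenvalue n r • E r from hdec, hE.sum_smul_pow]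
    simp [Matrix.sum_apply]
  have hx := eq_of_gnEigenvalue_moments hn
    ((hmoment 0).trans (by simp)) ((hmoment 1).trans (by rw [pow_one, gnAdj.zero_one]))
    ((hmoment 2).trans gnAdj.sq_zero_one) ((hmoment 3).trans gnAdj.pow_three_zero_one)
    ((hmoment 4).trans gnAdj.pow_four_zero_one)
  have hn₀ : (0 : ℝ) < n := by exact_mod_cast hn
  simp only [Fin.sum_univ_five, congrFun hx, Matrix.cons_val, abs_neg, abs_zero,
    abs_of_pos (by positivity : (0 : ℝ) < n / (2 * (2 * n + 1))),
    abs_of_pos (by positivity : (0 : ℝ) < n / (2 * n + 1))]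
  field_simp
  ring

open Matrix in
theorem stmt_14 (n : ℕ) (hn : 1 ≤ n)
    (A : Matrix (Fin (2 * n + 2)) (Fin (2 * n + 2)) ℝ)
    (hA : ∀ i j : Fin (2 * n + 2), A i j =
      if ((i : ℕ) < 2 ∧ 2 ≤ (j : ℕ) ∧ (j : ℕ) < n + 2) ∨
         ((j : ℕ) < 2 ∧ 2 ≤ (i : ℕ) ∧ (i : ℕ) < n + 2) ∨
         (2 ≤ (i : ℕ) ∧ (i : ℕ) < n + 2 ∧ (j : ℕ) = (i : ℕ) + n) ∨
         (2 ≤ (j : ℕ) ∧ (j : ℕ) < n + 2 ∧ (i : ℕ) = (j : ℕ) + n)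
      then 1 else 0)
    (E : Fin 5 → Matrix (Fin (2 * n + 2)) (Fin (2 * n + 2)) ℝ)
    (hsym : ∀ r, (E r)ᵀ = E r)
    (horth : ∀ r s, E r * E s = if r = s then E r else 0)
    (hsum : ∑ r, E r = 1)
    (hdec : A = ∑ r,
      (![Real.sqrt (2 * n + 1), -Real.sqrt (2 * n + 1), 1, -1, 0] r) • E r) :
    ∑ r, |E r 0 1| = 2 * n / (2 * n + 1) ∧
    Filter.Tendsto (fun m : ℕ => (2 * m : ℝ) / (2 * m + 1))
      Filter.atTop (nhds 1) :=
  stmt_14_general n hn A hA E horth hsum hdec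
end

section
/- Let n ≥ 1 and for each k with 1 ≤ k ≤ n define e_k = (−1)^{n−k}·k²·((n−1)!)²·√n·C(2n, n+k)/(2n)!. Then Σ_{k=1}^{n} 2|e_k| = 2·4^{n−1}/(√n·(n+1)·C_n), where C_n = (1/(n+1))·C(2n,n) is the n-th Catalan number, and the sign of e_k is positive if and only if k ≡ n (mod 2). -/
/-!
Up to the positive factor `(n-1)!² √n / (2n)!` and the sign `(-1)^(n-k)`, `e k` is
`k² C(2n, n+k)`, so both claims reduce to `∑_{k=1}^n k² C(2n, n+k) = n 4^(n-1)` together with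
`(n!)² C(2n, n) = (2n)!`. The sum is evaluated by summation by parts: Pascal's rule and
absorption give `k C(2n, n+k) = n (C(2n-1, n+k-1) - C(2n-1, n+k))`, which leaves
`n ∑_{k=1}^n C(2n-1, n+k-1)`, the upper half of the row `2n-1`, equal to `n 4^(n-1)`.
-/

open Finset
open scoped Nat

namespace Nat

theorem mul_choose_two_mul_add_two (m k : ℕ) :
    k * (2 * m + 2).choose (m + 1 + k) + (m + 1) * (2 * m + 1).choose (m + k + 1) =
      (m + 1) * (2 * m + 1).choose (m + k) := by
  have hpascal : (2 * m + 2).choose (m + 1 + k) =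
      (2 * m + 1).choose (m + k) + (2 * m + 1).choose (m + k + 1) := by
    rw [show m + 1 + k = m + k + 1 by omega]
    exact choose_succ_succ' _ _
  have habsorb := choose_succ_right_eq (2 * m + 1) (m + k)
  rw [hpascal]
  rcases le_or_gt k (m + 1) with hk | hk
  · rw [show 2 * m + 1 - (m + k) = m + 1 - k by omega] at habsorb
    zify [hk] at habsorb ⊢
    linear_combination habsorb
  · simp [choose_eq_zero_of_lt (show 2 * m + 1 < m + k by omega),
      choose_eq_zero_of_lt (show 2 * m + 1 < m + k + 1 by omega)]

theorem sum_Icc_sq_mul_choose_add (m N : ℕ) :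
    ∑ k ∈ Icc 1 N, k ^ 2 * (2 * m + 2).choose (m + 1 + k) +
        (m + 1) * N * (2 * m + 1).choose (m + (N + 1)) =
      (m + 1) * ∑ k ∈ Icc 1 N, (2 * m + 1).choose (m + k) := by
  induction N with
  | zero => simp
  | succ N ih =>
    rw [sum_Icc_succ_top (by omega), sum_Icc_succ_top (by omega)]
    linear_combination ih + (N + 1) * mul_choose_two_mul_add_two m (N + 1)

theorem sum_Icc_choose_halfway (m : ℕ) :
    ∑ k ∈ Icc 1 (m + 1), (2 * m + 1).choose (m + k) = 4 ^ m := by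
  rw [← sum_range_choose_halfway m]
  refine sum_nbij' (m + 1 - ·) (m + 1 - ·) ?_ ?_ ?_ ?_ ?_ <;> intro k hk <;>
    simp only [mem_Icc, mem_range] at hk ⊢
  iterate 4 omega
  exact choose_symm_of_eq_add (by omega)

theorem sum_Icc_sq_mul_choose (n : ℕ) :
    ∑ k ∈ Icc 1 n, k ^ 2 * (2 * n).choose (n + k) = n * 4 ^ (n - 1) := by
  cases n with
  | zero => simp
  | succ m =>
    have h := sum_Icc_sq_mul_choose_add m (m + 1)
    rw [sum_Icc_choose_halfway, choose_eq_zero_of_lt (by omega), mul_zero, add_zero] at h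
    simpa [mul_add, add_assoc, add_comm 1] using h

theorem sq_factorial_pred_mul_sq_mul_choose {n : ℕ} (hn : n ≠ 0) :
    (n - 1)! ^ 2 * n ^ 2 * (2 * n).choose n = (2 * n)! := by
  have h := choose_mul_factorial_mul_factorial (show n ≤ 2 * n by omega)
  rw [show 2 * n - n = n by omega, ← mul_factorial_pred hn] at h
  linear_combination h

end Nat

theorem neg_one_pow_mul_pos_iff {R : Type*} [Ring R] [LinearOrder R] [IsStrictOrderedRing R]
    {x : R} (hx : 0 < x) (j : ℕ) : 0 < (-1) ^ j * x ↔ Even j := by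
  rcases Nat.even_or_odd j with hj | hj
  · simp [hj.neg_one_pow, hj, hx]
  · simp [hj.neg_one_pow, Nat.not_even_iff_odd.mpr hj, hx.le]

theorem stmt_18 (n : ℕ) (hn : 1 ≤ n) (e : ℕ → ℝ)
    (he : ∀ k : ℕ, 1 ≤ k → k ≤ n →
      e k = (-1) ^ (n - k) * (k : ℝ) ^ 2 * ((Nat.factorial (n - 1) : ℝ)) ^ 2 *
        Real.sqrt n * (Nat.choose (2 * n) (n + k) : ℝ) /
          (Nat.factorial (2 * n) : ℝ))
    (Cn : ℝ) (hCn : Cn = (Nat.choose (2 * n) n : ℝ) / (n + 1)) :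
    (∑ k ∈ Finset.Icc 1 n, 2 * |e k| =
      2 * 4 ^ (n - 1) / (Real.sqrt n * (n + 1) * Cn)) ∧
    (∀ k ∈ Finset.Icc 1 n, (0 < e k ↔ k % 2 = n % 2)) := by
  set c : ℝ := (n - 1)! ^ 2 * √n / (2 * n)! with hc_def
  have he' (k : ℕ) (hk : k ∈ Icc 1 n) :
      e k = (-1) ^ (n - k) * (c * (k ^ 2 * (2 * n).choose (n + k) : ℕ)) := by
    rw [he k (mem_Icc.mp hk).1 (mem_Icc.mp hk).2, hc_def]
    push_cast
    ring
  constructor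
  · have hsum : ∑ k ∈ Icc 1 n, 2 * |e k| = 2 * c * (n * 4 ^ (n - 1) : ℕ) := by
      rw [← Nat.sum_Icc_sq_mul_choose, Nat.cast_sum, mul_sum]
      refine sum_congr rfl fun k hk => ?_
      rw [he' k hk, abs_mul, abs_neg_one_pow, one_mul, abs_of_nonneg (by positivity)]
      ring
    have hC : ((2 * n).choose n : ℝ) ≠ 0 := mod_cast (Nat.choose_pos (by omega)).ne'
    have hfac : ((n - 1)! ^ 2 * n ^ 2 * (2 * n).choose n : ℝ) = (2 * n)! :=
      mod_cast Nat.sq_factorial_pred_mul_sq_mul_choose (by omega)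
    rw [hsum, hCn, hc_def]
    field_simp
    push_cast
    rw [Real.sq_sqrt n.cast_nonneg]
    linear_combination 4 ^ (n - 1) * hfac
  · intro k hk
    obtain ⟨hk1, hkn⟩ := mem_Icc.mp hk
    have hpos : 0 < k ^ 2 * (2 * n).choose (n + k) :=
      Nat.mul_pos (by positivity) (Nat.choose_pos (by omega))
    rw [he' k hk, neg_one_pow_mul_pos_iff (by positivity), Nat.even_sub hkn,
      Nat.even_iff, Nat.even_iff]
    omega
end
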